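/- arXiv:2106.06098 — 2 statements merged into one kernel-verified Lean document; each statement's English description precedes it below -/
import Mathlib

section
/- Let $f_{1},\dots,f_{T}: \mathbb{R}^n \to \mathbb{R}$ be differentiable convex functions, $\mathcal{K} \subset \mathbb{R}^n$ a nonempty closed convex set of diameter at most $D$, and suppose $\|\nabla f_t(x)\| \le G$ for all $t$ and $x\in\mathcal{K}$. Let $x_1 \in \mathcal{K}$ and define the online gradient descent iterates $x_{t+1} = \Pi_{\mathcal{K}}(x_t - \eta_t \nabla f_t(x_t))$ with $\eta_t = \frac{D}{G\sqrt{t}}$, where $\Pi_{\mathcal{K}}$ is the Euclidean projection. Then $\sum_{t=1}^T f_t(x_t) - \min_{x^*\in\mathcal{K}} \sum_{t=1}^T f_t(x^*) \le \frac{3}{2} G D \sqrt{T}$. -/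
/-!
Convexity bounds each loss gap `f t (x t) - f t x⋆` by the linearized gap `⟪∇f t (x t), x t - x⋆⟫`.
Since the projection onto a convex set does not increase distances to points of the set, the
gradient step gives `⟪g, x t - x⋆⟫ ≤ (‖x t - x⋆‖² - ‖x (t+1) - x⋆‖²) / (2η t) + η t ‖g‖² / 2`.
The weights `1 / (2η t) = G√t / (2D)` are nondecreasing, so by summation by parts the first terms
add up to at most `D² / (2η T) = GD√T/2`, while the second add up to
`(GD/2) ∑ 1/√t ≤ GD√T`.
-/

open Finset Real InnerProductSpace

section Convexity

variable {E : Type*} [NormedAddCommGroup E]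

theorem ConvexOn.hasFDerivAt_sub_le [NormedSpace ℝ E] {f : E → ℝ} {f' : E →L[ℝ] ℝ} {x : E}
    (hf : ConvexOn ℝ Set.univ f) (hx : HasFDerivAt f f' x) (y : E) :
    f' (y - x) ≤ f y - f x := by
  let φ : ℝ → ℝ := f ∘ AffineMap.lineMap x y
  have hφ : ConvexOn ℝ Set.univ φ := by
    simpa using hf.comp_affineMap (AffineMap.lineMap x y)
  have hφ' : HasDerivAt φ (f' (y - x)) 0 := by
    apply HasFDerivAt.comp_hasDerivAt
    · simpa using hx
    · exact AffineMap.hasDerivAt_lineMap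
  simpa [φ, slope_def_field] using
    hφ.le_slope_of_hasDerivAt (Set.mem_univ 0) (Set.mem_univ 1) zero_lt_one hφ'

theorem ConvexOn.inner_sub_le_of_hasGradientAt [InnerProductSpace ℝ E] [CompleteSpace E]
    {f : E → ℝ} {g x : E} (hf : ConvexOn ℝ Set.univ f) (hx : HasGradientAt f g x) (y : E) :
    ⟪g, y - x⟫_ℝ ≤ f y - f x :=
  hf.hasFDerivAt_sub_le hx.hasFDerivAt y

end Convexity

section Projection

variable {F : Type*} [NormedAddCommGroup F] [InnerProductSpace ℝ F]

theorem Convex.norm_sub_le_of_isMinOn {K : Set F} (hK : Convex ℝ K) {y p z : F} (hp : p ∈ K)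
    (hmin : IsMinOn (‖y - ·‖) K p) (hz : z ∈ K) : ‖p - z‖ ≤ ‖y - z‖ := by
  have hinner : ⟪y - p, z - p⟫_ℝ ≤ 0 :=
    (norm_eq_iInf_iff_real_inner_le_zero hK hp).1 (hmin.iInf_eq hp).symm z hz
  have hsq : ‖y - z‖ ^ 2 = ‖y - p‖ ^ 2 - 2 * ⟪y - p, z - p⟫_ℝ + ‖p - z‖ ^ 2 := by
    rw [show y - z = (y - p) - (z - p) by abel, norm_sub_sq_real, ← norm_neg (z - p), neg_sub]
  refine (sq_le_sq₀ (norm_nonneg _) (norm_nonneg _)).1 ?_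
  nlinarith [sq_nonneg ‖y - p‖]

theorem inner_le_of_norm_sub_le_norm_sub_smul {x g z p : F} {η : ℝ} (hη : 0 < η)
    (hp : ‖p - z‖ ≤ ‖x - η • g - z‖) :
    ⟪g, x - z⟫_ℝ ≤ (2 * η)⁻¹ * (‖x - z‖ ^ 2 - ‖p - z‖ ^ 2) + η / 2 * ‖g‖ ^ 2 := by
  have hstep : ‖x - η • g - z‖ ^ 2 = ‖x - z‖ ^ 2 - 2 * η * ⟪g, x - z⟫_ℝ + η ^ 2 * ‖g‖ ^ 2 := by
    rw [sub_right_comm, norm_sub_sq_real, real_inner_smul_right, real_inner_comm, norm_smul,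
      Real.norm_of_nonneg hη.le]
    ring
  have hsq : ‖p - z‖ ^ 2 ≤ ‖x - η • g - z‖ ^ 2 := by gcongr
  have hη2 : 0 < 2 * η := by positivity
  calc ⟪g, x - z⟫_ℝ = (2 * η)⁻¹ * (2 * η * ⟪g, x - z⟫_ℝ) := by field_simp
    _ ≤ (2 * η)⁻¹ * (‖x - z‖ ^ 2 - ‖p - z‖ ^ 2 + η ^ 2 * ‖g‖ ^ 2) := by gcongr; linarith
    _ = (2 * η)⁻¹ * (‖x - z‖ ^ 2 - ‖p - z‖ ^ 2) + η / 2 * ‖g‖ ^ 2 := by field_simp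

theorem ConvexOn.sub_le_of_norm_sub_le_norm_sub_smul [CompleteSpace F] {f : F → ℝ}
    {g x z p : F} {η : ℝ} (hf : ConvexOn ℝ Set.univ f) (hg : HasGradientAt f g x) (hη : 0 < η)
    (hp : ‖p - z‖ ≤ ‖x - η • g - z‖) :
    f x - f z ≤ (2 * η)⁻¹ * (‖x - z‖ ^ 2 - ‖p - z‖ ^ 2) + η / 2 * ‖g‖ ^ 2 := by
  have hconvex := hf.inner_sub_le_of_hasGradientAt hg z
  rw [← neg_sub x z, inner_neg_right] at hconvex
  linarith [inner_le_of_norm_sub_le_norm_sub_smul hη hp]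

end Projection

section Sums

theorem sum_Icc_mul_sub_succ_le {w a : ℕ → ℝ} {M : ℝ} (hw : Monotone w) (hw0 : 0 ≤ w 0)
    (ha : ∀ t, 1 ≤ t → a t ≤ M) (T : ℕ) :
    ∑ t ∈ Icc 1 T, w t * (a t - a (t + 1)) ≤ w T * (M - a (T + 1)) := by
  induction T with
  | zero => simpa using mul_nonneg hw0 (sub_nonneg.2 (ha 1 le_rfl))
  | succ T ih =>
    rw [sum_Icc_succ_top (by omega)]
    have hwT : w T ≤ w (T + 1) := hw (Nat.le_succ T)
    nlinarith [ha (T + 1) (by omega)]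

theorem sum_Icc_inv_sqrt_le (T : ℕ) : ∑ t ∈ Icc 1 T, (√t)⁻¹ ≤ 2 * √T := by
  induction T with
  | zero => simp
  | succ T ih =>
    rw [sum_Icc_succ_top (by omega)]
    have hpos : 0 < √((T + 1 : ℕ) : ℝ) := by positivity
    -- `1 = (√(T+1) - √T)(√(T+1) + √T) ≤ 2√(T+1)(√(T+1) - √T)`
    have hstep : (√((T + 1 : ℕ) : ℝ))⁻¹ ≤ 2 * √((T + 1 : ℕ) : ℝ) - 2 * √T := by
      rw [inv_le_iff_one_le_mul₀' hpos]
      have hsq : √((T + 1 : ℕ) : ℝ) ^ 2 = √T ^ 2 + 1 := by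
        rw [sq_sqrt (by positivity), sq_sqrt (by positivity)]; push_cast; ring
      nlinarith [sqrt_nonneg T, sq_nonneg (√((T + 1 : ℕ) : ℝ) - √T)]
    linarith

theorem sum_Icc_le_of_le_telescoping {r a η : ℕ → ℝ} {D G : ℝ} (hD : 0 < D) (hG : 0 < G)
    (hη : ∀ t, η t = D / (G * √t)) (ha : ∀ t, 0 ≤ a t) (haD : ∀ t, 1 ≤ t → a t ≤ D ^ 2)
    (T : ℕ) (hr : ∀ t ∈ Icc 1 T, r t ≤ (2 * η t)⁻¹ * (a t - a (t + 1)) + η t / 2 * G ^ 2) :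
    ∑ t ∈ Icc 1 T, r t ≤ 3 / 2 * G * D * √T := by
  let w : ℕ → ℝ := fun t => G * √t / (2 * D)
  have hw : Monotone w := fun s t hst => by dsimp only [w]; gcongr
  have hr' : ∀ t ∈ Icc 1 T, r t ≤ w t * (a t - a (t + 1)) + G * D / 2 * (√t)⁻¹ := by
    intro t ht
    have ht1 : (0 : ℝ) < √t := by have := (mem_Icc.1 ht).1; positivity
    convert hr t ht using 2
    · rw [hη, mul_div_assoc', inv_div]
    · rw [hη]; field_simp
  calc ∑ t ∈ Icc 1 T, r t
      ≤ ∑ t ∈ Icc 1 T, w t * (a t - a (t + 1)) + G * D / 2 * ∑ t ∈ Icc 1 T, (√t)⁻¹ := by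
        rw [mul_sum, ← sum_add_distrib]; exact sum_le_sum hr'
    _ ≤ w T * (D ^ 2 - a (T + 1)) + G * D / 2 * (2 * √T) := by
      gcongr
      · exact sum_Icc_mul_sub_succ_le hw (by simp [w]) haD T
      · exact sum_Icc_inv_sqrt_le T
    _ ≤ w T * D ^ 2 + G * D * √T := by
      have : 0 ≤ w T := by positivity
      nlinarith [ha (T + 1)]
    _ = 3 / 2 * G * D * √T := by simp only [w]; field_simp; ring

end Sums

theorem stmt_5_general (n T : ℕ) (D G : ℝ) (hD : 0 < D) (hG : 0 < G)
    (f : ℕ → EuclideanSpace ℝ (Fin n) → ℝ)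
    (hconv : ∀ t, ConvexOn ℝ Set.univ (f t))
    (hdiff : ∀ t, Differentiable ℝ (f t))
    (K : Set (EuclideanSpace ℝ (Fin n))) (hKconv : Convex ℝ K)
    (hdiam : ∀ a ∈ K, ∀ b ∈ K, ‖a - b‖ ≤ D)
    (hgrad : ∀ t, ∀ x ∈ K, ‖gradient (f t) x‖ ≤ G)
    (proj : EuclideanSpace ℝ (Fin n) → EuclideanSpace ℝ (Fin n))
    (hprojmem : ∀ y, proj y ∈ K)
    (hprojmin : ∀ y, ∀ z ∈ K, ‖proj y - y‖ ≤ ‖z - y‖)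
    (η : ℕ → ℝ) (hη : ∀ t, η t = D / (G * Real.sqrt t))
    (x : ℕ → EuclideanSpace ℝ (Fin n)) (hx1 : x 1 ∈ K)
    (hstep : ∀ t, 1 ≤ t → x (t + 1) = proj (x t - η t • gradient (f t) (x t))) :
    ∀ xstar ∈ K,
      ∑ t ∈ Finset.Icc 1 T, f t (x t) - ∑ t ∈ Finset.Icc 1 T, f t xstar ≤
        (3 / 2) * G * D * Real.sqrt T := by
  intro xstar hxstar
  have hxK : ∀ t, 1 ≤ t → x t ∈ K := by
    intro t ht
    induction t, ht using Nat.le_induction with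
    | base => exact hx1
    | succ t ht _ => rw [hstep t ht]; exact hprojmem _
  have hprojK : ∀ y, ‖proj y - xstar‖ ≤ ‖y - xstar‖ := fun y =>
    hKconv.norm_sub_le_of_isMinOn (hprojmem y)
      (isMinOn_iff.2 fun z hz => by simpa only [norm_sub_rev y] using hprojmin y z hz) hxstar
  have hdist : ∀ t, 1 ≤ t → ‖x t - xstar‖ ^ 2 ≤ D ^ 2 := fun t ht => by
    gcongr; exact hdiam _ (hxK t ht) _ hxstar
  have hregret : ∀ t ∈ Icc 1 T, f t (x t) - f t xstar ≤
      (2 * η t)⁻¹ * (‖x t - xstar‖ ^ 2 - ‖x (t + 1) - xstar‖ ^ 2) + η t / 2 * G ^ 2 := by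
    intro t ht
    have ht1 : 1 ≤ t := (mem_Icc.1 ht).1
    have hηt : 0 < η t := by rw [hη]; positivity
    calc f t (x t) - f t xstar
        ≤ (2 * η t)⁻¹ * (‖x t - xstar‖ ^ 2 - ‖x (t + 1) - xstar‖ ^ 2)
          + η t / 2 * ‖gradient (f t) (x t)‖ ^ 2 :=
          (hconv t).sub_le_of_norm_sub_le_norm_sub_smul (hdiff t (x t)).hasGradientAt hηt
            (hstep t ht1 ▸ hprojK _)
      _ ≤ _ := by gcongr; exact hgrad t _ (hxK t ht1)
  rw [← sum_sub_distrib]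
  exact sum_Icc_le_of_le_telescoping (a := fun t => ‖x t - xstar‖ ^ 2) hD hG hη
    (fun _ => sq_nonneg _) hdist T hregret

theorem stmt_5 (n T : ℕ) (D G : ℝ) (hD : 0 < D) (hG : 0 < G)
    (f : ℕ → EuclideanSpace ℝ (Fin n) → ℝ)
    (hconv : ∀ t, ConvexOn ℝ Set.univ (f t))
    (hdiff : ∀ t, Differentiable ℝ (f t))
    (K : Set (EuclideanSpace ℝ (Fin n))) (hKne : K.Nonempty)
    (hKclosed : IsClosed K) (hKconv : Convex ℝ K)
    (hdiam : ∀ a ∈ K, ∀ b ∈ K, ‖a - b‖ ≤ D)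
    (hgrad : ∀ t, ∀ x ∈ K, ‖gradient (f t) x‖ ≤ G)
    (proj : EuclideanSpace ℝ (Fin n) → EuclideanSpace ℝ (Fin n))
    (hprojmem : ∀ y, proj y ∈ K)
    (hprojmin : ∀ y, ∀ z ∈ K, ‖proj y - y‖ ≤ ‖z - y‖)
    (η : ℕ → ℝ) (hη : ∀ t, η t = D / (G * Real.sqrt t))
    (x : ℕ → EuclideanSpace ℝ (Fin n)) (hx1 : x 1 ∈ K)
    (hstep : ∀ t, 1 ≤ t → x (t + 1) = proj (x t - η t • gradient (f t) (x t))) :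
    ∀ xstar ∈ K,
      ∑ t ∈ Finset.Icc 1 T, f t (x t) - ∑ t ∈ Finset.Icc 1 T, f t xstar ≤
        (3 / 2) * G * D * Real.sqrt T :=
  stmt_5_general n T D G hD hG f hconv hdiff K hKconv hdiam hgrad proj hprojmem hprojmin η hη x hx1
    hstep
end

section
/- Under the assumptions of Lemma 1 of the OMAC paper (e-ISS nominal dynamics with constants $\gamma, \rho$, zero initial states, bounded disturbances $\|w_t^{(i)}\|\le W$), if the realized squared losses satisfy $\sum_{i=1}^N\sum_{t=1}^T \|B_t^{(i)} u_t^{(i)} - f_t^{(i)} + w_t^{(i)}\|^2 \le N T W^2 + N \cdot r_{in}(T) + T \cdot r_{out}(N)$ for functions $r_{in}, r_{out}$, then the average control error satisfies $\mathsf{ACE} \le \frac{\gamma}{1-\rho}\sqrt{W^2 + \frac{r_{in}(T)}{T} + \frac{r_{out}(N)}{N}}$. -/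
/-! Lemma 1 bounds each ‖x_t‖ by a geometric convolution of the past ‖v_k‖; summing over `t` and
exchanging the sums, each ‖v_k‖ picks up at most the geometric series `∑ ρ^j ≤ 1/(1-ρ)`. Hence the
total state norm is at most `γ/(1-ρ)` times the total driving norm, which Cauchy–Schwarz bounds by
`√(NT)` times the square root of the total squared loss, i.e. by `NT √(W² + r_in/T + r_out/N)`. -/

open Finset

lemma geom_sum_le_inv_one_sub {ρ : ℝ} (hρ0 : 0 ≤ ρ) (hρ1 : ρ < 1) (m : ℕ) :
    ∑ j ∈ range m, ρ ^ j ≤ (1 - ρ)⁻¹ := by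
  have h := geom_sum_Ico_le_of_lt_one (m := 0) (n := m) hρ0 hρ1
  rwa [← range_eq_Ico, pow_zero, one_div] at h

lemma sum_Icc_pow_sub_le {ρ : ℝ} (hρ0 : 0 ≤ ρ) (hρ1 : ρ < 1) (k T : ℕ) :
    ∑ t ∈ Icc (k + 1) T, ρ ^ (t - 1 - k) ≤ (1 - ρ)⁻¹ := by
  rw [← Ico_add_one_right_eq_Icc, sum_Ico_eq_sum_range]
  simpa only [show ∀ j, k + 1 + j - 1 - k = j by omega] using geom_sum_le_inv_one_sub hρ0 hρ1 _

lemma sum_geom_convolution_le {ρ : ℝ} (hρ0 : 0 ≤ ρ) (hρ1 : ρ < 1) (T : ℕ) {a : ℕ → ℝ}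
    (ha : ∀ k, 0 ≤ a k) :
    ∑ t ∈ Icc 1 T, ∑ k ∈ Icc 1 (t - 1), ρ ^ (t - 1 - k) * a k ≤
      (1 - ρ)⁻¹ * ∑ k ∈ Icc 1 T, a k := by
  rw [sum_comm' (t' := Icc 1 T) (s' := fun k ↦ Icc (k + 1) T)
    (by intro t k; simp only [mem_Icc]; omega), mul_sum]
  gcongr with k
  rw [← sum_mul]
  exact mul_le_mul_of_nonneg_right (sum_Icc_pow_sub_le hρ0 hρ1 k T) (ha k)

lemma sum_le_of_le_geom_convolution {ρ γ : ℝ} (hρ0 : 0 ≤ ρ) (hρ1 : ρ < 1) (hγ : 0 ≤ γ) {T : ℕ}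
    {b a : ℕ → ℝ} (ha : ∀ k, 0 ≤ a k)
    (h : ∀ t ∈ Icc 1 T, b t ≤ γ * ∑ k ∈ Icc 1 (t - 1), ρ ^ (t - 1 - k) * a k) :
    ∑ t ∈ Icc 1 T, b t ≤ γ / (1 - ρ) * ∑ t ∈ Icc 1 T, a t :=
  calc ∑ t ∈ Icc 1 T, b t
      ≤ γ * ∑ t ∈ Icc 1 T, ∑ k ∈ Icc 1 (t - 1), ρ ^ (t - 1 - k) * a k := by
        rw [mul_sum]; exact sum_le_sum h
    _ ≤ γ * ((1 - ρ)⁻¹ * ∑ t ∈ Icc 1 T, a t) := by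
        gcongr; exact sum_geom_convolution_le hρ0 hρ1 T ha
    _ = γ / (1 - ρ) * ∑ t ∈ Icc 1 T, a t := by ring

lemma sq_sum_sum_le_card_mul_sum_sum_sq {α β : Type*} (s : Finset α) (t : Finset β)
    (f : α → β → ℝ) :
    (∑ i ∈ s, ∑ j ∈ t, f i j) ^ 2 ≤ (#s * #t : ℝ) * ∑ i ∈ s, ∑ j ∈ t, f i j ^ 2 := by
  simpa only [sum_product, card_product, Nat.cast_mul] using
    sq_sum_le_card_mul_sum_sq (s := s ×ˢ t) (f := fun p ↦ f p.1 p.2)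

lemma le_mul_sqrt_of_sq_le_mul {S Q E c : ℝ} (hS : 0 ≤ S) (hc : 0 ≤ c) (hSQ : S ^ 2 ≤ c * Q)
    (hQE : Q ≤ c * E) : S ≤ c * √E := by
  rw [← Real.sqrt_sq hc, ← Real.sqrt_mul (sq_nonneg c), ← Real.sqrt_sq hS]
  exact Real.sqrt_le_sqrt (by nlinarith)

theorem stmt_7_general (n N T : ℕ) (hN : 1 ≤ N) (hT : 1 ≤ T)
    (ρ γ W : ℝ) (hρ0 : 0 ≤ ρ) (hρ1 : ρ < 1) (hγ : 0 ≤ γ)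
    (x v : Fin N → ℕ → EuclideanSpace ℝ (Fin n))
    (rin rout : ℕ → ℝ)
    -- e-ISS with zero initial state: driving terms v i t = B_t u_t - f_t + w_t
    (hISS : ∀ i, ∀ t ∈ Finset.Icc 1 T,
      ‖x i t‖ ≤ γ * ∑ k ∈ Finset.Icc 1 (t - 1), ρ ^ (t - 1 - k) * ‖v i k‖)
    (hreg : ∑ i, ∑ t ∈ Finset.Icc 1 T, ‖v i t‖ ^ 2 ≤
      (N : ℝ) * T * W ^ 2 + (N : ℝ) * rin T + (T : ℝ) * rout N) :
    (1 / ((T : ℝ) * N)) * ∑ i, ∑ t ∈ Finset.Icc 1 T, ‖x i t‖ ≤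
      (γ / (1 - ρ)) * Real.sqrt (W ^ 2 + rin T / T + rout N / N) := by
  have hTN : (0 : ℝ) < T * N := by positivity
  have hcard : (#(univ : Finset (Fin N)) * #(Icc 1 T) : ℝ) = T * N := by simp [mul_comm]
  have hloss : ∑ i, ∑ t ∈ Icc 1 T, ‖v i t‖ ^ 2 ≤ T * N * (W ^ 2 + rin T / T + rout N / N) := by
    convert hreg using 1; field_simp
  have hdrive : ∑ i, ∑ t ∈ Icc 1 T, ‖v i t‖ ≤ T * N * √(W ^ 2 + rin T / T + rout N / N) :=
    le_mul_sqrt_of_sq_le_mul (by positivity) hTN.le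
      (hcard ▸ sq_sum_sum_le_card_mul_sum_sum_sq _ _ _) hloss
  have hstate : ∑ i, ∑ t ∈ Icc 1 T, ‖x i t‖ ≤ γ / (1 - ρ) * ∑ i, ∑ t ∈ Icc 1 T, ‖v i t‖ := by
    rw [mul_sum]
    exact sum_le_sum fun i _ ↦
      sum_le_of_le_geom_convolution hρ0 hρ1 hγ (fun _ ↦ norm_nonneg _) (hISS i)
  have hγρ : 0 ≤ γ / (1 - ρ) := div_nonneg hγ (by linarith)
  rw [one_div]
  refine inv_mul_le_of_le_mul₀ hTN.le (mul_nonneg hγρ (Real.sqrt_nonneg _)) (hstate.trans ?_)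
  calc γ / (1 - ρ) * ∑ i, ∑ t ∈ Icc 1 T, ‖v i t‖
      ≤ γ / (1 - ρ) * (T * N * √(W ^ 2 + rin T / T + rout N / N)) := by gcongr
    _ = T * N * (γ / (1 - ρ) * √(W ^ 2 + rin T / T + rout N / N)) := by ring

theorem stmt_7 (n N T : ℕ) (hN : 1 ≤ N) (hT : 1 ≤ T)
    (ρ γ W : ℝ) (hρ0 : 0 ≤ ρ) (hρ1 : ρ < 1) (hγ : 0 ≤ γ) (hW : 0 ≤ W)
    (x v : Fin N → ℕ → EuclideanSpace ℝ (Fin n))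
    (rin rout : ℕ → ℝ)
    -- e-ISS with zero initial state: driving terms v i t = B_t u_t - f_t + w_t
    (hISS : ∀ i, ∀ t ∈ Finset.Icc 1 T,
      ‖x i t‖ ≤ γ * ∑ k ∈ Finset.Icc 1 (t - 1), ρ ^ (t - 1 - k) * ‖v i k‖)
    (hreg : ∑ i, ∑ t ∈ Finset.Icc 1 T, ‖v i t‖ ^ 2 ≤
      (N : ℝ) * T * W ^ 2 + (N : ℝ) * rin T + (T : ℝ) * rout N) :
    (1 / ((T : ℝ) * N)) * ∑ i, ∑ t ∈ Finset.Icc 1 T, ‖x i t‖ ≤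
      (γ / (1 - ρ)) * Real.sqrt (W ^ 2 + rin T / T + rout N / N) :=
  stmt_7_general n N T hN hT ρ γ W hρ0 hρ1 hγ x v rin rout hISS hreg
end
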